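/- Let R, G be symmetric positive definite, X of full column rank, Z arbitrary, H = R + ZGZᵀ, P = H⁻¹ − H⁻¹X(XᵀH⁻¹X)⁻¹XᵀH⁻¹, and let (τ̂, ũ) solve the mixed model equations C(τ̂; ũ) = (XᵀR⁻¹y; ZᵀR⁻¹y) where C = [[XᵀR⁻¹X, XᵀR⁻¹Z],[ZᵀR⁻¹X, ZᵀR⁻¹Z + G⁻¹]]. Then Py = R⁻¹(y − Xτ̂ − Zũ). -/

import Mathlib

/-!
Write `e = y - X τ - Z u`. The mixed model equations say exactly that `Xᵀ R⁻¹ e = 0` and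
`Zᵀ R⁻¹ e = G⁻¹ u`. The second gives `H R⁻¹ e = e + Z G G⁻¹ u = y - X τ`, i.e.
`R⁻¹ e = H⁻¹ (y - X τ)`. The first then says that `τ` solves the generalized least squares
equations `Xᵀ H⁻¹ X τ = Xᵀ H⁻¹ y`, and substituting `τ = (Xᵀ H⁻¹ X)⁻¹ Xᵀ H⁻¹ y` into `P y`
leaves `H⁻¹ (y - X τ)`.
-/

open Matrix

namespace Matrix

theorem mulVec_injective_of_rank_eq_card {m n K : Type*} [Fintype n] [Field K]
    (A : Matrix m n K) (hA : A.rank = Fintype.card n) : Function.Injective A.mulVec := by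
  have hker : LinearMap.ker A.mulVecLin = ⊥ := by
    have := A.mulVecLin.finrank_range_add_finrank_ker
    rw [← rank, hA, Module.finrank_fintype_fun_eq_card, add_eq_left] at this
    exact Submodule.finrank_eq_zero.mp this
  exact LinearMap.ker_eq_bot.mp hker

variable {K : Type*} [CommRing K] {n p b : Type*} [Fintype n] [Fintype p] [Fintype b]

theorem mixedModel_fromBlocks_mulVec_eq_iff (W : Matrix n n K) (Q : Matrix b b K)
    (X : Matrix n p K) (Z : Matrix n b K) (y : n → K) (τ : p → K) (u : b → K) :
    fromBlocks (Xᵀ * W * X) (Xᵀ * W * Z) (Zᵀ * W * X) (Zᵀ * W * Z + Q) *ᵥ Sum.elim τ u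
        = Sum.elim ((Xᵀ * W) *ᵥ y) ((Zᵀ * W) *ᵥ y) ↔
      Xᵀ *ᵥ (W *ᵥ (y - X *ᵥ τ - Z *ᵥ u)) = 0 ∧
        Zᵀ *ᵥ (W *ᵥ (y - X *ᵥ τ - Z *ᵥ u)) = Q *ᵥ u := by
  simp only [fromBlocks_mulVec, Sum.elim_comp_inl, Sum.elim_comp_inr, Sum.elim_eq_iff,
    add_mulVec, mulVec_sub, ← mulVec_mulVec]
  exact and_congr (by rw [sub_sub, sub_eq_zero, eq_comm])
    (by rw [sub_sub, sub_eq_iff_eq_add', eq_comm, add_assoc])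

theorem inv_mulVec_eq_of_transpose_mulVec_inv_mulVec_eq [DecidableEq n] [DecidableEq b] {R : Matrix n n K} {G : Matrix b b K}
    {Z : Matrix n b K} {e : n → K} {u : b → K} (hR : IsUnit R.det) (hG : IsUnit G.det)
    (hH : IsUnit (R + Z * G * Zᵀ).det) (h : Zᵀ *ᵥ (R⁻¹ *ᵥ e) = G⁻¹ *ᵥ u) :
    R⁻¹ *ᵥ e = (R + Z * G * Zᵀ)⁻¹ *ᵥ (e + Z *ᵥ u) := by
  have hHe : (R + Z * G * Zᵀ) *ᵥ (R⁻¹ *ᵥ e) = e + Z *ᵥ u := by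
    calc (R + Z * G * Zᵀ) *ᵥ (R⁻¹ *ᵥ e) = R *ᵥ (R⁻¹ *ᵥ e) + Z *ᵥ (G *ᵥ (Zᵀ *ᵥ (R⁻¹ *ᵥ e))) := by
          simp only [add_mulVec, ← mulVec_mulVec]
      _ = e + Z *ᵥ u := by
          rw [h, mulVec_mulVec e, mulVec_mulVec u, mul_nonsing_inv R hR, mul_nonsing_inv G hG,
            one_mulVec, one_mulVec]
  rw [← hHe, mulVec_mulVec, nonsing_inv_mul _ hH, one_mulVec]

theorem sub_mul_inv_mul_mulVec_eq_mulVec_sub [DecidableEq p] {V : Matrix n n K} {X : Matrix n p K} {y : n → K}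
    {τ : p → K} (hM : IsUnit (Xᵀ * V * X).det) (h : Xᵀ *ᵥ (V *ᵥ (y - X *ᵥ τ)) = 0) :
    (V - V * X * (Xᵀ * V * X)⁻¹ * Xᵀ * V) *ᵥ y = V *ᵥ (y - X *ᵥ τ) := by
  have hτ : (Xᵀ * V * X)⁻¹ *ᵥ ((Xᵀ * V) *ᵥ y) = τ := by
    rw [mulVec_sub, mulVec_sub, sub_eq_zero, mulVec_mulVec, mulVec_mulVec, mulVec_mulVec] at h
    rw [h, mulVec_mulVec, nonsing_inv_mul _ hM, one_mulVec]
  rw [sub_mulVec, mulVec_sub, ← hτ]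
  simp only [mulVec_mulVec, Matrix.mul_assoc]

end Matrix

theorem stmt_17 (n p b : ℕ) (R : Matrix (Fin n) (Fin n) ℝ) (hR : R.PosDef)
    (G : Matrix (Fin b) (Fin b) ℝ) (hG : G.PosDef)
    (X : Matrix (Fin n) (Fin p) ℝ) (hX : X.rank = p)
    (Z : Matrix (Fin n) (Fin b) ℝ)
    (H : Matrix (Fin n) (Fin n) ℝ) (hH : H = R + Z * G * Zᵀ)
    (P : Matrix (Fin n) (Fin n) ℝ)
    (hP : P = H⁻¹ - H⁻¹ * X * (Xᵀ * H⁻¹ * X)⁻¹ * Xᵀ * H⁻¹)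
    (C : Matrix (Fin p ⊕ Fin b) (Fin p ⊕ Fin b) ℝ)
    (hC : C = Matrix.fromBlocks (Xᵀ * R⁻¹ * X) (Xᵀ * R⁻¹ * Z)
        (Zᵀ * R⁻¹ * X) (Zᵀ * R⁻¹ * Z + G⁻¹))
    (y : Fin n → ℝ) (τ : Fin p → ℝ) (u : Fin b → ℝ)
    (hsol : C *ᵥ Sum.elim τ u
      = Sum.elim ((Xᵀ * R⁻¹) *ᵥ y) ((Zᵀ * R⁻¹) *ᵥ y)) :
    P *ᵥ y = R⁻¹ *ᵥ (y - X *ᵥ τ - Z *ᵥ u) := by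
  subst hH hP hC
  obtain ⟨hXe, hZe⟩ := (mixedModel_fromBlocks_mulVec_eq_iff _ _ _ _ _ _ _).mp hsol
  have hH : (R + Z * G * Zᵀ).PosDef :=
    hR.add_posSemidef (by simpa using hG.posSemidef.mul_mul_conjTranspose_same Z)
  have hM : (Xᵀ * (R + Z * G * Zᵀ)⁻¹ * X).PosDef := by
    simpa using hH.inv.conjTranspose_mul_mul_same (X.mulVec_injective_of_rank_eq_card (by simpa))
  have hRe := inv_mulVec_eq_of_transpose_mulVec_inv_mulVec_eq hR.det_pos.ne'.isUnit
    hG.det_pos.ne'.isUnit hH.det_pos.ne'.isUnit hZe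
  rw [sub_add_cancel] at hRe
  rw [hRe] at hXe ⊢
  exact sub_mul_inv_mul_mulVec_eq_mulVec_sub hM.det_pos.ne'.isUnit hXe
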